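/- arXiv:math/0406553 — 2 statements merged into one kernel-verified Lean document; each statement's English description precedes it below -/
import Mathlib

section
/- Let A and B be factorizable (complex) algebras with lan(B) = {0}, let n ≥ 2, and let φ : A → B be a surjective n-homomorphism. If a₁, a₂, c₁, c₂ ∈ A satisfy φ(a₁a₂) = φ(c₁c₂), then φ(a₁)φ(a₂) = φ(c₁)φ(c₂). -/
/-- `φ` is an `n`-homomorphism: `φ (a₁ ⋯ aₙ) = φ a₁ ⋯ φ aₙ` for all `a₁, …, aₙ`
(encoded via a head element together with a list, so that it makes sense for
non-unital algebras). -/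
def IsNHom {A B : Type*} [NonUnitalNonAssocSemiring A] [NonUnitalNonAssocSemiring B]
    [Module ℂ A] [Module ℂ B] (n : ℕ) (φ : A →ₗ[ℂ] B) : Prop :=
  ∀ (a : A) (l : List A), l.length + 1 = n →
    φ (l.foldl (· * ·) a) = (l.map φ).foldl (· * ·) (φ a)

private lemma foldl_mul_left {R : Type*} [NonUnitalRing R] (l : List R) :
    ∀ y z : R, z * l.foldl (· * ·) y = l.foldl (· * ·) (z * y) := by
  induction l with
  | nil => intro y z; simp
  | cons a l ih => intro y z; simp only [List.foldl_cons]; rw [ih, mul_assoc]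

private lemma foldl_mul_zero {R : Type*} [NonUnitalRing R] (l : List R) :
    l.foldl (· * ·) (0 : R) = 0 := by
  induction l with
  | nil => rfl
  | cons a l ih => simpa using ih

private lemma foldl_mul_sub {R : Type*} [NonUnitalRing R] (l : List R) :
    ∀ u v : R, l.foldl (· * ·) (u - v) = l.foldl (· * ·) u - l.foldl (· * ·) v := by
  induction l with
  | nil => intro u v; rfl
  | cons a l ih => intro u v; simp only [List.foldl_cons]; rw [sub_mul, ih]

/-- Let `A, B` be factorizable complex algebras with trivial left annihilator `lan B = {0}`,
and let `φ : A → B` be a surjective `n`-homomorphism. If `φ (a₁ a₂) = φ (c₁ c₂)`, then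
`φ a₁ * φ a₂ = φ c₁ * φ c₂`. -/
theorem stmt5 {A B : Type*}
    [NonUnitalRing A] [Module ℂ A] [SMulCommClass ℂ A A] [IsScalarTower ℂ A A]
    [NonUnitalRing B] [Module ℂ B] [SMulCommClass ℂ B B] [IsScalarTower ℂ B B]
    (hfactA : ∀ a : A, ∃ b c : A, a = b * c)
    (hfactB : ∀ b : B, ∃ c d : B, b = c * d)
    (hlan : ∀ b : B, (∀ x : B, b * x = 0) → b = 0)
    (n : ℕ) (hn : 2 ≤ n) (φ : A →ₗ[ℂ] B) (hsurj : Function.Surjective φ)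
    (hφ : IsNHom n φ) :
    ∀ a₁ a₂ c₁ c₂ : A, φ (a₁ * a₂) = φ (c₁ * c₂) → φ a₁ * φ a₂ = φ c₁ * φ c₂ := by
  -- every element of B is a product of k+1 images of φ
  have rep : ∀ (k : ℕ) (x : B), ∃ (q : A) (m : List A),
      m.length = k ∧ x = (m.map φ).foldl (· * ·) (φ q) := by
    intro k
    induction k with
    | zero =>
      intro x
      obtain ⟨q, hq⟩ := hsurj x
      exact ⟨q, [], rfl, hq.symm⟩
    | succ k ih =>
      intro x
      obtain ⟨y, z, hx⟩ := hfactB x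
      obtain ⟨q, m, hm, hy⟩ := ih y
      obtain ⟨r, hr⟩ := hsurj z
      refine ⟨q, m ++ [r], by simp [hm], ?_⟩
      simp only [List.map_append, List.foldl_append, List.map_cons, List.map_nil,
        List.foldl_cons, List.foldl_nil]
      rw [hx, hy, hr]
  -- key: if φ v = 0 then φ (v * (n-2 more factors)) = 0
  have key : ∀ v : A, φ v = 0 → ∀ l : List A, l.length + 2 = n →
      φ (l.foldl (· * ·) v) = 0 := by
    intro v hv l hl
    apply hlan
    intro x
    obtain ⟨q, m, hm, hx⟩ := rep (n - 2) x
    set P := l.foldl (· * ·) v with hP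
    have h1 := hφ P (q :: m) (by simp [hm]; omega)
    have hx' : φ P * x = φ (m.foldl (· * ·) (P * q)) := by
      rw [hx, foldl_mul_left]
      rw [show m.foldl (· * ·) (P * q) = (q :: m).foldl (· * ·) P from rfl, h1]
      simp
    rw [hx']
    set w := m.foldl (· * ·) q with hw
    have hPw : m.foldl (· * ·) (P * q) = P * w := by
      rw [hw, foldl_mul_left]
    have h2 := hφ v (l ++ [w]) (by simp; omega)
    have h3 : (l ++ [w]).foldl (· * ·) v = P * w := by
      simp [List.foldl_append, hP]
    rw [hPw, ← h3, h2, List.map_append, List.foldl_append, hv, foldl_mul_zero]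
    simp
  intro a₁ a₂ c₁ c₂ hac
  obtain rfl | h3 : n = 2 ∨ 3 ≤ n := by omega
  · have h1 := hφ a₁ [a₂] rfl
    have h2 := hφ c₁ [c₂] rfl
    simp only [List.foldl_cons, List.foldl_nil, List.map_cons, List.map_nil] at h1 h2
    rw [← h1, ← h2, hac]
  · have hdiff : φ a₁ * φ a₂ - φ c₁ * φ c₂ = 0 := by
      apply hlan
      intro x
      obtain ⟨q, m, hm, hx⟩ := rep (n - 3) x
      have ha := hφ a₁ (a₂ :: q :: m) (by simp [hm]; omega)
      have hc := hφ c₁ (c₂ :: q :: m) (by simp [hm]; omega)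
      simp only [List.foldl_cons, List.map_cons] at ha hc
      have hxa : φ a₁ * φ a₂ * x = φ (m.foldl (· * ·) (a₁ * a₂ * q)) := by
        rw [hx, foldl_mul_left]; exact ha.symm
      have hxc : φ c₁ * φ c₂ * x = φ (m.foldl (· * ·) (c₁ * c₂ * q)) := by
        rw [hx, foldl_mul_left]; exact hc.symm
      rw [sub_mul, hxa, hxc, ← map_sub, ← foldl_mul_sub, ← sub_mul]
      have hv : φ (a₁ * a₂ - c₁ * c₂) = 0 := by rw [map_sub, hac, sub_self]
      have := key (a₁ * a₂ - c₁ * c₂) hv (q :: m) (by simp [hm]; omega)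
      simpa using this
    exact sub_eq_zero.mp hdiff
end

section
/- Let A and B be (complex) algebras, n ≥ 2, and suppose A is linearly generated by its idempotents, i.e., the linear span of the set of idempotent elements of A is all of A. If φ : A → B is an n-homomorphism, then φ is associative: φ(a)·φ(bc) = φ(ab)·φ(c) for all a, b, c ∈ A. -/
private lemma foldl_mul_assoc' {B : Type*} [NonUnitalRing B] :
    ∀ (l : List B) (x y : B), l.foldl (· * ·) (x * y) = x * l.foldl (· * ·) y
  | [], x, y => rfl
  | b :: l, x, y => by
    simp only [List.foldl_cons]
    rw [mul_assoc, foldl_mul_assoc' l x (y * b)]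

private lemma foldl_replicate_idem {B : Type*} [NonUnitalRing B] {e : B} (he : e * e = e) :
    ∀ m : ℕ, (List.replicate m e).foldl (· * ·) e = e
  | 0 => rfl
  | m + 1 => by
    rw [List.replicate_succ, List.foldl_cons]
    show (List.replicate m e).foldl (· * ·) (e * e) = e
    rw [he, foldl_replicate_idem he m]

/-- If `A` is linearly generated by its idempotents and `φ : A → B` is an `n`-homomorphism,
then `φ` is associative: `φ a * φ (b * c) = φ (a * b) * φ c` for all `a, b, c`. -/
theorem stmt8 {A B : Type*}
    [NonUnitalRing A] [Module ℂ A] [SMulCommClass ℂ A A] [IsScalarTower ℂ A A]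
    [NonUnitalRing B] [Module ℂ B] [SMulCommClass ℂ B B] [IsScalarTower ℂ B B]
    (hidem : Submodule.span ℂ {e : A | e * e = e} = ⊤)
    (n : ℕ) (hn : 2 ≤ n) (φ : A →ₗ[ℂ] B) (hφ : IsNHom n φ) :
    ∀ a b c : A, φ a * φ (b * c) = φ (a * b) * φ c := by
  intro a b c
  have hb : b ∈ Submodule.span ℂ {e : A | e * e = e} := by
    rw [hidem]; exact Submodule.mem_top
  induction hb using Submodule.span_induction with
  | mem e he =>
    have he' : e * e = e := he
    obtain ⟨k, rfl⟩ : ∃ k, n = k + 2 := ⟨n - 2, by omega⟩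
    set g : B := (List.replicate k (φ e)).foldl (· * ·) (φ e) with hg
    have h1 : φ (a * e) = φ a * g := by
      have h := hφ a (List.replicate (k + 1) e) (by simp)
      rw [List.replicate_succ, List.foldl_cons, foldl_mul_assoc',
        foldl_replicate_idem he' k, List.map_cons, List.map_replicate,
        List.foldl_cons, foldl_mul_assoc'] at h
      exact h
    have h2 : φ (e * c) = g * φ c := by
      have h := hφ e (List.replicate k e ++ [c]) (by simp)
      rw [List.foldl_append, foldl_replicate_idem he' k, List.foldl_cons,
        List.foldl_nil, List.map_append, List.map_replicate, List.map_singleton,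
        List.foldl_append, List.foldl_cons, List.foldl_nil] at h
      exact h
    rw [h1, h2, mul_assoc]
  | zero => simp
  | add x y _ _ hx hy => simp [mul_add, add_mul, map_add, hx, hy]
  | smul r x _ hx =>
    simp only [smul_mul_assoc, mul_smul_comm, map_smul, hx]
end
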